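/- arXiv:1507.03256 — 6 statements merged into one kernel-verified Lean document; each statement's English description precedes it below -/
import Mathlib

section
/- If τ₀, …, τ_m is an n-train, and ≺ is the order on n-element sets defined by σ ≺ σ' iff σ(k) > σ'(k) for the largest k with σ(k) ≠ σ'(k), then for i' < i with τ_i ≠ τ_{i'} we have τ_i ≺ τ_{i'}. In particular, later sets in a train are ≺-smaller. -/
/-- An `n`-train of length `m+1`: a sequence `τ 0, …, τ m` of distinct `n`-element
subsets of `ℕ` such that every element of `τ (i+1) \ τ i` exceeds every element of `τ i`. -/
def IsTrain (n m : ℕ) (τ : ℕ → Finset ℕ) : Prop :=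
  (∀ i ≤ m, (τ i).card = n) ∧
  (∀ i ≤ m, ∀ i' ≤ m, i ≠ i' → τ i ≠ τ i') ∧
  (∀ i < m, ∀ a ∈ τ (i + 1) \ τ i, ∀ x ∈ τ i, x < a)

/-- `kth σ k` is the `(k+1)`-st smallest element of `σ`. -/
def kth (σ : Finset ℕ) (k : ℕ) : ℕ := (σ.sort (· ≤ ·)).getD k 0

/-- `Prec n σ σ'` : at the largest index `k < n` of disagreement, `σ (k) > σ' (k)`. -/
def Prec (n : ℕ) (σ σ' : Finset ℕ) : Prop :=
  ∃ k < n, kth σ' k < kth σ k ∧ ∀ k', k < k' → k' < n → kth σ k' = kth σ' k'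

/-- `σ` is `c`-homogeneous with color `ι`. -/
def Homog (c : Sym2 ℕ → Bool) (σ : Finset ℕ) (ι : Bool) : Prop :=
  ∀ x ∈ σ, ∀ y ∈ σ, x ≠ y → c s(x, y) = ι

lemma kth_eq_orderEmb (σ : Finset ℕ) {n : ℕ} (h : σ.card = n) {j : ℕ} (hj : j < n) :
    kth σ j = σ.orderEmbOfFin h ⟨j, hj⟩ := by
  rw [Finset.orderEmbOfFin_apply, kth,
    List.getD_eq_getElem _ _ (by rw [Finset.length_sort, h]; exact hj)]
  simp [Fin.getElem_fin]

lemma kth_mem (σ : Finset ℕ) {n : ℕ} (h : σ.card = n) {j : ℕ} (hj : j < n) :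
    kth σ j ∈ σ := by
  rw [kth_eq_orderEmb σ h hj]; exact Finset.orderEmbOfFin_mem σ h _

lemma kth_strictMono (σ : Finset ℕ) {n : ℕ} (h : σ.card = n) {i j : ℕ}
    (hij : i < j) (hj : j < n) : kth σ i < kth σ j := by
  rw [kth_eq_orderEmb σ h (hij.trans hj), kth_eq_orderEmb σ h hj]
  exact (σ.orderEmbOfFin h).strictMono (by simpa [Fin.lt_def] using hij)

lemma fin_le_apply {a b : ℕ} {g : Fin a → Fin b} (hg : StrictMono g) (i : Fin a) :
    (i : ℕ) ≤ (g i : ℕ) := by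
  obtain ⟨v, hv⟩ := i
  induction' v with v ih
  · exact Nat.zero_le _
  · have h1 : (⟨v, Nat.lt_of_succ_lt hv⟩ : Fin a) < ⟨v + 1, hv⟩ := by
      simp [Fin.lt_def]
    have h2 := hg h1
    rw [Fin.lt_def] at h2
    have h3 := ih (Nat.lt_of_succ_lt hv)
    simp only [Fin.val_mk] at h2 h3 ⊢
    omega

lemma kth_le_of_subset {s t : Finset ℕ} (hst : s ⊆ t) {j : ℕ} (hj : j < s.card) :
    kth t j ≤ kth s j := by
  have hjt : j < t.card := lt_of_lt_of_le hj (Finset.card_le_card hst)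
  set e := t.orderIsoOfFin rfl with he
  set g : Fin s.card → Fin t.card :=
    fun i => e.symm ⟨s.orderEmbOfFin rfl i, hst (Finset.orderEmbOfFin_mem s rfl i)⟩ with hgdef
  have hg : StrictMono g := by
    intro i i' hii
    apply e.symm.strictMono
    exact Subtype.mk_lt_mk.mpr ((s.orderEmbOfFin rfl).strictMono hii)
  have hle : (⟨j, hj⟩ : Fin s.card).val ≤ (g ⟨j, hj⟩ : ℕ) := fin_le_apply hg _
  have : (e ⟨j, hjt⟩ : ℕ) ≤ (e (g ⟨j, hj⟩) : ℕ) := by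
    have := e.monotone (show (⟨j, hjt⟩ : Fin t.card) ≤ g ⟨j, hj⟩ from by
      rw [Fin.le_def]; exact hle)
    exact this
  have hval : (e (g ⟨j, hj⟩) : ℕ) = s.orderEmbOfFin rfl ⟨j, hj⟩ := by
    rw [hgdef]; simp
  rw [kth_eq_orderEmb t rfl hjt, kth_eq_orderEmb s rfl hj]
  rw [← Finset.coe_orderIsoOfFin_apply t rfl, ← hval]
  exact this

/-- If `σ` and `σ'` have size `n` and every element of `σ'\σ` exceeds every element
of `σ`, then `kth σ j ≤ kth σ' j` for all `j < n`. -/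
lemma kth_step_le {σ σ' : Finset ℕ} {n : ℕ} (hσ : σ.card = n) (hσ' : σ'.card = n)
    (hext : ∀ a ∈ σ' \ σ, ∀ x ∈ σ, x < a) {j : ℕ} (hj : j < n) :
    kth σ j ≤ kth σ' j := by
  set b := kth σ' j with hb
  have hbmem : b ∈ σ' := kth_mem σ' hσ' hj
  by_cases hbσ : b ∈ σ
  · -- all elements of σ' that are ≤ b lie in σ
    set s := σ'.filter (· ≤ b) with hs
    have hsub : s ⊆ σ := by
      intro a ha
      rw [hs, Finset.mem_filter] at ha
      by_contra hna
      have : b < a := hext a (Finset.mem_sdiff.mpr ⟨ha.1, hna⟩) b hbσ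
      omega
    have hcard : j < s.card := by
      have himg : (Finset.range (j + 1)).image (kth σ') ⊆ s := by
        intro x hx
        rw [Finset.mem_image] at hx
        obtain ⟨i, hi, rfl⟩ := hx
        rw [Finset.mem_range] at hi
        have hin : i < n := by omega
        rw [hs, Finset.mem_filter]
        refine ⟨kth_mem σ' hσ' hin, ?_⟩
        rcases Nat.lt_or_ge i j with hlt | hge
        · exact le_of_lt (kth_strictMono σ' hσ' hlt hj)
        · have : i = j := by omega
          simp [this, hb]
      have hinj : Set.InjOn (kth σ') (Finset.range (j + 1)) := by
        intro x hx y hy hxy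
        simp only [Finset.coe_range, Set.mem_Iio] at hx hy
        rcases Nat.lt_trichotomy x y with h1 | h1 | h1
        · exact absurd hxy (Nat.ne_of_lt (kth_strictMono σ' hσ' h1 (by omega)))
        · exact h1
        · exact absurd hxy.symm (Nat.ne_of_lt (kth_strictMono σ' hσ' h1 (by omega)))
      have := Finset.card_le_card himg
      rw [Finset.card_image_of_injOn hinj, Finset.card_range] at this
      omega
    have h1 : kth σ j ≤ kth s j := kth_le_of_subset hsub hcard
    have h2 : kth s j ∈ s := kth_mem s rfl hcard
    rw [hs, Finset.mem_filter] at h2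
    exact h1.trans h2.2
  · have : b ∈ σ' \ σ := Finset.mem_sdiff.mpr ⟨hbmem, hbσ⟩
    exact le_of_lt (hext b this _ (kth_mem σ hσ hj))

lemma train_kth_le (n m : ℕ) (τ : ℕ → Finset ℕ) (h : IsTrain n m τ)
    (i' i : ℕ) (h' : i' ≤ i) (hi : i ≤ m) {j : ℕ} (hj : j < n) :
    kth (τ i') j ≤ kth (τ i) j := by
  induction' i with i ih
  · have : i' = 0 := by omega
    rw [this]
  · rcases Nat.lt_or_ge i' (i + 1) with hlt | hge
    · have hstep : kth (τ i) j ≤ kth (τ (i + 1)) j :=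
        kth_step_le (h.1 i (by omega)) (h.1 (i + 1) hi)
          (h.2.2 i (by omega)) hj
      exact le_trans (ih (by omega) (by omega)) hstep
    · have : i' = i + 1 := by omega
      rw [this]

/-- Later sets in a train are `Prec`-smaller: if `i' < i ≤ m` then `τ i ≺ τ i'`. -/
theorem train_prec (n m : ℕ) (τ : ℕ → Finset ℕ) (h : IsTrain n m τ)
    (i' i : ℕ) (h' : i' < i) (hi : i ≤ m) :
    Prec n (τ i) (τ i') := by
  have hi' : i' ≤ m := by omega
  have hne : τ i ≠ τ i' := h.2.1 i hi i' hi' (by omega)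
  have hle : ∀ j < n, kth (τ i') j ≤ kth (τ i) j :=
    fun j hj => train_kth_le n m τ h i' i (le_of_lt h') hi hj
  -- there is some index of disagreement
  have hex : ∃ k < n, kth (τ i) k ≠ kth (τ i') k := by
    by_contra hc
    push_neg at hc
    apply hne
    have hlists : (τ i).sort (· ≤ ·) = (τ i').sort (· ≤ ·) := by
      apply List.ext_getElem
      · rw [Finset.length_sort, Finset.length_sort, h.1 i hi, h.1 i' hi']
      · intro k h1 h2
        have hk : k < n := by rw [Finset.length_sort, h.1 i hi] at h1; exact h1
        have := hc k hk
        rwa [kth, kth, List.getD_eq_getElem _ _ h1, List.getD_eq_getElem _ _ h2] at this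
    have := congrArg List.toFinset hlists
    rwa [Finset.sort_toFinset, Finset.sort_toFinset] at this
  have hKne : ((Finset.range n).filter (fun k => kth (τ i) k ≠ kth (τ i') k)).Nonempty := by
    obtain ⟨k, hk, hkne⟩ := hex
    exact ⟨k, Finset.mem_filter.mpr ⟨Finset.mem_range.mpr hk, hkne⟩⟩
  have hkmem := Finset.max'_mem _ hKne
  rw [Finset.mem_filter, Finset.mem_range] at hkmem
  refine ⟨_, hkmem.1, ?_, ?_⟩
  · exact lt_of_le_of_ne (hle _ hkmem.1) (Ne.symm hkmem.2)
  · intro k' hkk' hk'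
    by_contra hne'
    have hmem : k' ∈ (Finset.range n).filter (fun k => kth (τ i) k ≠ kth (τ i') k) :=
      Finset.mem_filter.mpr ⟨Finset.mem_range.mpr hk', hne'⟩
    have := Finset.le_max' _ k' hmem
    omega
end

section
/- (Main combinatorial lemma on trains.) Suppose for each j < n we are given an (n+1)-train τ^j_0, τ^j_1, …, τ^j_{m_j}, and let c : [ℕ]² → {R, B} be any 2-coloring of pairs. Then there exists a coloring c* : ⋃_{j,i} τ^j_i → {R, B} such that for every set τ^j_i on which c is homogeneous with color ι, there is an element a ∈ τ^j_i with c*(a) = the opposite color of ι. -/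
lemma train_sup_mono {n m : ℕ} {τ : ℕ → Finset ℕ} (h : IsTrain n m τ) (hn : 0 < n)
    {i i' : ℕ} (hii : i ≤ i') : i' ≤ m → (τ i).sup id ≤ (τ i').sup id := by
  induction i', hii using Nat.le_induction with
  | base => exact fun _ => le_refl _
  | succ i' hii ih =>
    intro hi'
    refine le_trans (ih (by omega)) ?_
    have hne : τ (i'+1) ≠ τ i' := h.2.1 (i'+1) hi' i' (by omega) (by omega)
    have hdiff : (τ (i'+1) \ τ i').Nonempty := by
      rw [Finset.sdiff_nonempty]
      intro hsub
      exact hne (Finset.eq_of_subset_of_card_le hsub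
        (by rw [h.1 i' (by omega), h.1 (i'+1) hi']))
    obtain ⟨x, hx⟩ := hdiff
    have hgt : ∀ y ∈ τ i', y < x := h.2.2 i' (by omega) x hx
    have hxin : x ∈ τ (i'+1) := (Finset.mem_sdiff.1 hx).1
    have hτne : (τ i').Nonempty := Finset.card_pos.1 (by rw [h.1 i' (by omega)]; exact hn)
    obtain ⟨y, hy⟩ := hτne
    have hsuplt : (τ i').sup id < x :=
      (Finset.sup_lt_iff (Nat.lt_of_le_of_lt (Nat.zero_le y) (hgt y hy))).2 hgt
    exact le_trans hsuplt.le (Finset.le_sup (f := id) hxin)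

lemma train_sup_lt {n m : ℕ} {τ : ℕ → Finset ℕ} (h : IsTrain n m τ) (hn : 0 < n)
    {i i' x : ℕ} (hii : i ≤ i') :
    i' ≤ m → x ∈ τ i' → x ∉ τ i → (τ i).sup id < x := by
  induction i', hii using Nat.le_induction with
  | base => exact fun _ hx hxi => absurd hx hxi
  | succ i' hii ih =>
    intro hi' hx hxi
    by_cases hx' : x ∈ τ i'
    · exact ih (by omega) hx' hxi
    · have hgt : ∀ y ∈ τ i', y < x := h.2.2 i' (by omega) x (Finset.mem_sdiff.2 ⟨hx, hx'⟩)
      have hτne : (τ i').Nonempty := Finset.card_pos.1 (by rw [h.1 i' (by omega)]; exact hn)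
      obtain ⟨y, hy⟩ := hτne
      have hsuplt : (τ i').sup id < x :=
        (Finset.sup_lt_iff (Nat.lt_of_le_of_lt (Nat.zero_le y) (hgt y hy))).2 hgt
      exact lt_of_le_of_lt (train_sup_mono h hn hii (by omega)) hsuplt

/-- Main combinatorial lemma: given `n` many `(n+1)`-trains and any 2-coloring `c`
of pairs, there is a vertex coloring `c*` such that every `c`-homogeneous set in the
trains of color `ι` contains a point of `c*`-color `!ι`. -/
theorem train_lemma (n : ℕ) (m : ℕ → ℕ) (τ : ℕ → ℕ → Finset ℕ)
    (htrain : ∀ j < n, IsTrain (n + 1) (m j) (τ j))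
    (c : Sym2 ℕ → Bool) :
    ∃ cs : ℕ → Bool, ∀ j < n, ∀ i ≤ m j, ∀ ι : Bool,
      Homog c (τ j i) ι → ∃ a ∈ τ j i, cs a = !ι := by
  classical
  set M := (Finset.range n).sup m with hM
  set F : Finset (ℕ × ℕ) := ((Finset.range n) ×ˢ (Finset.range (M+1))).filter
      (fun p => p.2 ≤ m p.1 ∧ ∃ ι, Homog c (τ p.1 p.2) ι) with hF
  have hsel : ∀ a : ℕ, ∃ p : ℕ × ℕ,
      (F.filter (fun q => a ∈ τ q.1 q.2)).Nonempty →
        p ∈ F.filter (fun q => a ∈ τ q.1 q.2) ∧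
        ∀ q ∈ F.filter (fun q => a ∈ τ q.1 q.2),
          (τ q.1 q.2).sup id ≤ (τ p.1 p.2).sup id := by
    intro a
    by_cases h : (F.filter (fun q => a ∈ τ q.1 q.2)).Nonempty
    · obtain ⟨p, hp, hmax⟩ := Finset.exists_max_image _ (fun q => (τ q.1 q.2).sup id) h
      exact ⟨p, fun _ => ⟨hp, hmax⟩⟩
    · exact ⟨(0, 0), fun h' => absurd h' h⟩
  choose sel hsel using hsel
  have hcol : ∀ p : ℕ × ℕ, ∃ ι : Bool,
      (∃ ι', Homog c (τ p.1 p.2) ι') → Homog c (τ p.1 p.2) ι := by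
    intro p
    by_cases h : ∃ ι', Homog c (τ p.1 p.2) ι'
    · exact ⟨h.choose, fun _ => h.choose_spec⟩
    · exact ⟨true, fun h' => absurd h' h⟩
  choose col hcol using hcol
  refine ⟨fun a => if (F.filter (fun q => a ∈ τ q.1 q.2)).Nonempty
      then !(col (sel a)) else true, ?_⟩
  intro j hj i hi ι hhom
  by_contra hcon
  push_neg at hcon
  set σ := τ j i with hσ
  have hmemF : (j, i) ∈ F := by
    simp only [hF, Finset.mem_filter, Finset.mem_product, Finset.mem_range]
    exact ⟨⟨hj, Nat.lt_succ_of_le (le_trans hi (Finset.le_sup (Finset.mem_range.2 hj)))⟩,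
      hi, ⟨ι, hhom⟩⟩
  have hFa : ∀ a ∈ σ, (j, i) ∈ F.filter (fun q => a ∈ τ q.1 q.2) := by
    intro a ha; exact Finset.mem_filter.2 ⟨hmemF, ha⟩
  have hne : ∀ a ∈ σ, (F.filter (fun q => a ∈ τ q.1 q.2)).Nonempty :=
    fun a ha => ⟨_, hFa a ha⟩
  have hselmem : ∀ a ∈ σ, sel a ∈ F.filter (fun q => a ∈ τ q.1 q.2) :=
    fun a ha => (hsel a (hne a ha)).1
  have hselF : ∀ a ∈ σ, sel a ∈ F := fun a ha => (Finset.mem_filter.1 (hselmem a ha)).1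
  have hain : ∀ a ∈ σ, a ∈ τ (sel a).1 (sel a).2 :=
    fun a ha => (Finset.mem_filter.1 (hselmem a ha)).2
  have hmaxa : ∀ a ∈ σ, σ.sup id ≤ (τ (sel a).1 (sel a).2).sup id :=
    fun a ha => (hsel a (hne a ha)).2 (j, i) (hFa a ha)
  have hselF' : ∀ a ∈ σ, (sel a).1 < n ∧ (sel a).2 ≤ m (sel a).1 ∧
      (∃ ι', Homog c (τ (sel a).1 (sel a).2) ι') := by
    intro a ha
    have := hselF a ha
    simp only [hF, Finset.mem_filter, Finset.mem_product, Finset.mem_range] at this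
    exact ⟨this.1.1, this.2.1, this.2.2⟩
  have hval : ∀ a ∈ σ, col (sel a) = !ι := by
    intro a ha
    have h1 := hcon a ha
    rw [if_pos (hne a ha)] at h1
    revert h1
    cases h2 : col (sel a) <;> cases ι <;> simp
  have hhoma : ∀ a ∈ σ, Homog c (τ (sel a).1 (sel a).2) (!ι) := by
    intro a ha
    have := hcol (sel a) (hselF' a ha).2.2
    rwa [hval a ha] at this
  have inter : ∀ a ∈ σ, ∀ x ∈ τ (sel a).1 (sel a).2, x ∈ σ → x = a := by
    intro a ha x hx hxσ
    by_contra hxa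
    have h1 : c s(x, a) = ι := hhom x hxσ a ha hxa
    have h2 : c s(x, a) = !ι := hhoma a ha x hx a (hain a ha) hxa
    rw [h1] at h2
    cases ι <;> simp at h2
  have key : ∀ a ∈ σ, ∀ b ∈ σ, a ≠ b → (sel a).1 = (sel b).1 →
      (sel a).2 < (sel b).2 → False := by
    intro a ha b hb hab hJ hlt
    have hJn : (sel a).1 < n := (hselF' a ha).1
    have htr := htrain (sel a).1 hJn
    have hbm : (sel b).2 ≤ m (sel a).1 := hJ ▸ (hselF' b hb).2.1
    have hbin : b ∈ τ (sel a).1 (sel b).2 := by rw [hJ]; exact hain b hb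
    have hbnot : b ∉ τ (sel a).1 (sel a).2 := by
      intro hbin'
      exact hab ((inter a ha b hbin' hb).symm)
    have hslt : (τ (sel a).1 (sel a).2).sup id < b :=
      train_sup_lt htr (Nat.succ_pos n) hlt.le hbm hbin hbnot
    have hble : b ≤ σ.sup id := Finset.le_sup (f := id) hb
    have := hmaxa a ha
    omega
  have hcard : σ.card = n + 1 := (htrain j hj).1 i hi
  have hmaps : ∀ a ∈ σ, (sel a).1 ∈ Finset.range n :=
    fun a ha => Finset.mem_range.2 (hselF' a ha).1
  obtain ⟨a, ha, b, hb, hab, hJ⟩ := Finset.exists_ne_map_eq_of_card_lt_of_maps_to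
    (by rw [hcard, Finset.card_range]; omega) hmaps
  rcases lt_trichotomy (sel a).2 (sel b).2 with h1 | h1 | h1
  · exact key a ha b hb hab hJ h1
  · have hsel_eq : sel a = sel b := Prod.ext hJ h1
    have : b ∈ τ (sel a).1 (sel a).2 := hsel_eq ▸ hain b hb
    exact hab ((inter a ha b this hb).symm)
  · exact key b hb a ha hab.symm hJ.symm h1
end

section
/- Special case of the train lemma for a single train: if τ₀, …, τ_m is a 2-train (sets of size 2, with n = 1), and c : [ℕ]² → {R, B} is a 2-coloring, then there is a coloring c* : ⋃ᵢ τᵢ → {R, B} such that for every τᵢ on which c is homogeneous with color ι, some a ∈ τᵢ has c*(a) = ῑ. -/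
/-- Single-train case (`n = 1`, sets of size 2): for any 2-train and any coloring `c`,
there is a vertex coloring `c*` such that every `c`-homogeneous `τ i` of color `ι`
contains a point of `c*`-color `!ι`. -/
theorem train_lemma_single (m : ℕ) (τ : ℕ → Finset ℕ) (htrain : IsTrain 2 m τ)
    (c : Sym2 ℕ → Bool) :
    ∃ cs : ℕ → Bool, ∀ i ≤ m, ∀ ι : Bool,
      Homog c (τ i) ι → ∃ a ∈ τ i, cs a = !ι := by
  classical
  obtain ⟨hcard, hdist, hstep⟩ := htrain
  have hne : ∀ i ≤ m, (τ i).Nonempty := fun i hi =>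
    Finset.card_pos.mp (by rw [hcard i hi]; norm_num)
  set M : ℕ → ℕ := fun i => if h : (τ i).Nonempty then (τ i).max' h else 0 with hM
  set mn : ℕ → ℕ := fun i => if h : (τ i).Nonempty then (τ i).min' h else 0 with hmn
  have hMval : ∀ i (hi : i ≤ m), M i = (τ i).max' (hne i hi) := by
    intro i hi; simp [hM, hne i hi]
  have hmnval : ∀ i (hi : i ≤ m), mn i = (τ i).min' (hne i hi) := by
    intro i hi; simp [hmn, hne i hi]
  have hMmem : ∀ i ≤ m, M i ∈ τ i := fun i hi => by
    rw [hMval i hi]; exact Finset.max'_mem _ _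
  have hmnmem : ∀ i ≤ m, mn i ∈ τ i := fun i hi => by
    rw [hmnval i hi]; exact Finset.min'_mem _ _
  -- one step strict increase of maxima
  have hstep' : ∀ i < m, M i < M (i + 1) := by
    intro i hi
    have hi1 : i + 1 ≤ m := hi
    have hi0 : i ≤ m := le_of_lt hi
    have hne' : (τ (i + 1) \ τ i).Nonempty := by
      rw [Finset.sdiff_nonempty]
      intro hsub
      exact hdist (i+1) hi1 i hi0 (by omega)
        (Finset.eq_of_subset_of_card_le hsub (by rw [hcard i hi0, hcard (i+1) hi1]))
    obtain ⟨a, ha⟩ := hne'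
    have h1 : M i < a := hstep i hi a ha (M i) (hMmem i hi0)
    have h2 : a ≤ M (i + 1) := by
      rw [hMval (i+1) hi1]
      exact Finset.le_max' _ _ (Finset.mem_sdiff.mp ha).1
    omega
  have hmono : ∀ i j, j ≤ m → i < j → M i < M j := by
    intro i j hj hij
    induction j with
    | zero => omega
    | succ k ih =>
      rcases Nat.lt_succ_iff_lt_or_eq.mp hij with h | h
      · exact lt_trans (ih (by omega) h) (hstep' k (by omega))
      · subst h; exact hstep' i (by omega)
  have hinj : ∀ i ≤ m, ∀ j ≤ m, M i = M j → i = j := by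
    intro i hi j hj hMeq
    by_contra hne'
    rcases Nat.lt_or_ge i j with h | h
    · exact absurd hMeq (ne_of_lt (hmono i j hj h))
    · exact absurd hMeq.symm (ne_of_lt (hmono j i hi (by omega)))
  refine ⟨fun a => if h : ∃ i, i ≤ m ∧ M i = a then
      !(c s(mn (Classical.choose h), a)) else true, ?_⟩
  intro i hi ι hhom
  refine ⟨M i, hMmem i hi, ?_⟩
  have hex : ∃ j, j ≤ m ∧ M j = M i := ⟨i, hi, rfl⟩
  show (if h : ∃ j, j ≤ m ∧ M j = M i then
      !(c s(mn (Classical.choose h), M i)) else true) = !ι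
  rw [dif_pos hex]
  obtain ⟨hjm, hjM⟩ := Classical.choose_spec hex
  have hji : Classical.choose hex = i := hinj _ hjm _ hi hjM
  rw [hji]
  have hlt : mn i < M i := by
    rw [hmnval i hi, hMval i hi]
    exact Finset.min'_lt_max'_of_card _ (by rw [hcard i hi]; norm_num)
  rw [hhom (mn i) (hmnmem i hi) (M i) (hMmem i hi) (ne_of_lt hlt)]
end

section
/- (Finite anti-homogeneity extension step.) Let c : [ℕ]² → {R,B} be a coloring defined on pairs from {0, …, b−1}, and for each j < n let τ^j be an (n+1)-element subset of {0, …, b−1}. Suppose the sets τ^j can be arranged, together with finitely many other sets, into n many (n+1)-trains as in the train lemma. Then there is an extension of c to pairs {a, b} for a < b such that for each j < n, if c is homogeneous with color ι on [τ^j]², then the extended coloring assigns color ῑ to {a, b} for some a ∈ τ^j; in particular, τ^j ∪ {b} is not c-homogeneous. -/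
/-- Anti-homogeneity extension step: given `n` trains of `(n+1)`-sets, designated
members `τ j (ij j) ⊆ {0,…,b-1}`, and a coloring `c`, there is a coloring `c'`
agreeing with `c` on pairs below `b` such that for each `j`, if `τ j (ij j)` is
`c`-homogeneous with color `ι` then `c' {a, b} = !ι` for some `a ∈ τ j (ij j)`;
in particular `τ j (ij j) ∪ {b}` is not `c'`-homogeneous. -/
theorem extension_step (n b : ℕ) (m : ℕ → ℕ) (τ : ℕ → ℕ → Finset ℕ) (ij : ℕ → ℕ)
    (htrain : ∀ j < n, IsTrain (n + 1) (m j) (τ j))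
    (hij : ∀ j < n, ij j ≤ m j)
    (hsub : ∀ j < n, τ j (ij j) ⊆ Finset.range b)
    (c : Sym2 ℕ → Bool) :
    ∃ c' : Sym2 ℕ → Bool,
      (∀ x y : ℕ, x < b → y < b → c' s(x, y) = c s(x, y)) ∧
      ∀ j < n, ∀ ι : Bool, Homog c (τ j (ij j)) ι →
        (∃ a ∈ τ j (ij j), c' s(a, b) = !ι) ∧
        ¬ Homog c' (τ j (ij j) ∪ {b}) ι := by
  classical
  set T : Fin n → Finset ℕ := fun j => τ j (ij j) with hT
  have hcard : ∀ j : Fin n, (T j).card = n + 1 := fun j =>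
    (htrain j j.2).1 (ij j) (hij j j.2)
  have hall : ∀ s : Finset (Fin n), s.card ≤ (s.biUnion T).card := by
    intro s
    rcases s.eq_empty_or_nonempty with rfl | ⟨j, hj⟩
    · simp
    · calc s.card ≤ Fintype.card (Fin n) := s.card_le_univ
        _ = n := Fintype.card_fin n
        _ ≤ (T j).card := by rw [hcard]; omega
        _ ≤ (s.biUnion T).card :=
            Finset.card_le_card (fun a ha => Finset.mem_biUnion.2 ⟨j, hj, ha⟩)
  obtain ⟨f, hfinj, hfmem⟩ := (Finset.all_card_le_biUnion_card_iff_exists_injective T).1 hall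
  have hne : ∀ j : Fin n, (T j).Nonempty := fun j =>
    Finset.card_pos.1 (by rw [hcard]; omega)
  set ιc : Fin n → Bool := fun j => c s((T j).min' (hne j), (T j).max' (hne j)) with hιc
  set g : ℕ → Bool := fun a => if h : ∃ j : Fin n, f j = a then !(ιc h.choose) else false with hg
  refine ⟨Sym2.lift ⟨fun x y => if x = b then g y else if y = b then g x else c s(x, y), by
    intro x y
    by_cases hx : x = b <;> by_cases hy : y = b <;> simp [hx, hy, Sym2.eq_swap]⟩, ?_, ?_⟩
  · intro x y hx hy
    simp [Sym2.lift_mk, Nat.ne_of_lt hx, Nat.ne_of_lt hy]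
  · intro j hj ι hhom
    set jf : Fin n := ⟨j, hj⟩ with hjf
    have haT : f jf ∈ T jf := hfmem jf
    have hab : f jf < b := Finset.mem_range.1 (hsub j hj haT)
    have hab' : f jf ≠ b := Nat.ne_of_lt hab
    have hex : ∃ j' : Fin n, f j' = f jf := ⟨jf, rfl⟩
    have hch : hex.choose = jf := hfinj hex.choose_spec
    have hι : ιc jf = ι := by
      have hlt : (T jf).min' (hne jf) < (T jf).max' (hne jf) :=
        Finset.min'_lt_max'_of_card _ (by rw [hcard]; omega)
      exact hhom _ (Finset.min'_mem _ _) _ (Finset.max'_mem _ _) (Nat.ne_of_lt hlt)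
    have hval : Sym2.lift ⟨fun x y => if x = b then g y else if y = b then g x else c s(x, y),
        by intro x y; by_cases hx : x = b <;> by_cases hy : y = b <;>
          simp [hx, hy, Sym2.eq_swap]⟩ s(f jf, b) = !ι := by
      simp only [Sym2.lift_mk, if_neg hab', if_pos rfl, hg]
      rw [dif_pos hex, hch, hι]
      simp
    refine ⟨⟨f jf, haT, hval⟩, fun H => ?_⟩
    have := H (f jf) (Finset.mem_union_left _ haT) b
      (Finset.mem_union_right _ (Finset.mem_singleton_self b)) hab'
    rw [hval] at this
    exact (Bool.not_ne_self ι) this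
end

section
/- (Diagonalization core, combinatorial form.) Let n ≥ 1 and suppose that for each j < n we have a function F_j assigning to each b ∈ ℕ an (n+1)-element subset F_j(b) of {0, …, b−1} (for b large enough), such that the sequence (F_j(b))_b, after removing duplicates, forms an (n+1)-train for each j. Then there is a 2-coloring c : [ℕ]² → {R,B}, defined recursively in b (the value c({a,b}) for a < b depending only on c restricted to pairs below b and on the sets F_j(b)), such that for each j < n and each b: if c is homogeneous with color ι on [F_j(b)]², then some a ∈ F_j(b) satisfies c({a,b}) = ῑ. Consequently no infinite set S whose n+1 smallest elements equal F_j(b) for infinitely many b ∈ S is c-homogeneous. -/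
noncomputable def pick (s : Finset ℕ) (l : List ℕ) : ℕ :=
  if h : (s \ l.toFinset).Nonempty then (s \ l.toFinset).min' h else 0

noncomputable def sdrList (F : ℕ → Finset ℕ) : ℕ → List ℕ
  | 0 => []
  | j+1 => sdrList F j ++ [pick (F j) (sdrList F j)]

noncomputable def sdr (F : ℕ → Finset ℕ) (j : ℕ) : ℕ := pick (F j) (sdrList F j)

lemma sdrList_length (F : ℕ → Finset ℕ) (j : ℕ) : (sdrList F j).length = j := by
  induction j with
  | zero => simp [sdrList]
  | succ j ih => simp [sdrList, ih]

lemma mem_sdrList (F : ℕ → Finset ℕ) {i j : ℕ} (h : i < j) : sdr F i ∈ sdrList F j := by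
  induction j with
  | zero => omega
  | succ j ih =>
    rcases Nat.lt_succ_iff_lt_or_eq.mp h with h' | h'
    · simp [sdrList, ih h']
    · subst h'; simp [sdrList, sdr]

lemma sdr_spec (F : ℕ → Finset ℕ) (j : ℕ) (h : j < (F j).card) :
    sdr F j ∈ F j ∧ sdr F j ∉ sdrList F j := by
  have hne : ((F j) \ (sdrList F j).toFinset).Nonempty := by
    rw [← Finset.card_pos]
    have h1 : (sdrList F j).toFinset.card ≤ j := by
      calc (sdrList F j).toFinset.card ≤ (sdrList F j).length := (sdrList F j).toFinset_card_le
        _ = j := sdrList_length F j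
    have := Finset.le_card_sdiff (sdrList F j).toFinset (F j)
    omega
  have hm := Finset.min'_mem _ hne
  rw [Finset.mem_sdiff] at hm
  refine ⟨?_, ?_⟩ <;> simp only [sdr, pick, dif_pos hne]
  · exact hm.1
  · simpa using hm.2

lemma sdr_inj (F : ℕ → Finset ℕ) {i j n : ℕ} (hi : i < n) (hj : j < n)
    (hc : ∀ k < n, k < (F k).card) (hij : i ≠ j) : sdr F i ≠ sdr F j := by
  wlog h : i < j generalizing i j
  · exact (this hj hi hij.symm (by omega)).symm
  intro he
  have h1 := (sdr_spec F j (hc j hj)).2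
  have h2 := mem_sdrList F h
  rw [he] at h2
  exact h1 h2

open Classical in
noncomputable def col (n : ℕ) (F : ℕ → ℕ → Finset ℕ) (b a : ℕ) : Bool :=
  if (∃ j < n, a = sdr (fun i => F i b) j ∧
      ∀ x ∈ F j b, ∀ y ∈ F j b, x ≠ y →
        (if h : max x y < b then col n F (max x y) (min x y) else false) = true)
  then false else true
termination_by b
decreasing_by all_goals exact h

noncomputable def colc (n : ℕ) (F : ℕ → ℕ → Finset ℕ) : Sym2 ℕ → Bool :=
  Sym2.lift ⟨fun x y => col n F (max x y) (min x y), by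
    intro x y; simp [max_comm, min_comm]⟩

open Classical in
lemma col_eq (n : ℕ) (F : ℕ → ℕ → Finset ℕ) (b a : ℕ)
    (hsub : ∀ j < n, F j b ⊆ Finset.range b) :
    col n F b a =
      if (∃ j < n, a = sdr (fun i => F i b) j ∧ Homog (colc n F) (F j b) true)
      then false else true := by
  rw [col]
  congr 1
  · apply propext
    apply exists_congr; intro j
    apply and_congr_right; intro hj
    apply and_congr_right; intro _
    unfold Homog
    apply forall₂_congr; intro x hx
    apply forall₂_congr; intro y hy
    apply forall_congr'; intro hxy
    have hx' := Finset.mem_range.mp (hsub j hj hx)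
    have hy' := Finset.mem_range.mp (hsub j hj hy)
    rw [dif_pos (by omega : max x y < b)]
    rfl

/-- Diagonalization core: given, for each `j < n`, a family `F j b` of `(n+1)`-element
subsets of `{0,…,b-1}` (for `b ≥ b₀`) forming trains after removing duplicates, there
is a coloring `c` such that whenever `F j b` is `c`-homogeneous with color `ι`, some
`a ∈ F j b` has `c {a,b} = !ι`.  Consequently no infinite set `S` whose `n+1`
smallest elements equal `F j b` for infinitely many `b ∈ S` is `c`-homogeneous. -/
theorem diagonalization_core (n : ℕ) (hn : 1 ≤ n) (b₀ : ℕ) (F : ℕ → ℕ → Finset ℕ)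
    (hcard : ∀ j < n, ∀ b, b₀ ≤ b → (F j b).card = n + 1 ∧ F j b ⊆ Finset.range b)
    (htrain : ∀ j < n, ∀ b b', b₀ ≤ b → b < b' → F j b ≠ F j b' →
      ∀ a ∈ F j b' \ F j b, ∀ x ∈ F j b, x < a) :
    ∃ c : Sym2 ℕ → Bool,
      (∀ j < n, ∀ b, b₀ ≤ b → ∀ ι : Bool,
        Homog c (F j b) ι → ∃ a ∈ F j b, c s(a, b) = !ι) ∧
      ∀ S : Set ℕ, S.Infinite → ∀ τ : Finset ℕ, ↑τ ⊆ S → τ.card = n + 1 →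
        (∀ x ∈ S, x ∉ τ → ∀ y ∈ τ, y < x) →
        (∃ j < n, {b ∈ S | F j b = τ}.Infinite) →
        ¬ ∃ ι : Bool, ∀ x ∈ S, ∀ y ∈ S, x ≠ y → c s(x, y) = ι := by
  classical
  set c : Sym2 ℕ → Bool := colc n F with hc
  have key : ∀ j < n, ∀ b, b₀ ≤ b → ∀ ι : Bool,
      Homog c (F j b) ι → ∃ a ∈ F j b, c s(a, b) = !ι := by
    intro j hj b hb ι hHom
    have hsub : ∀ j' < n, F j' b ⊆ Finset.range b := fun j' hj' => (hcard j' hj' b hb).2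
    have hcards : ∀ k < n, k < ((fun i => F i b) k).card := by
      intro k hk
      have := (hcard k hk b hb).1
      simp only []
      omega
    set a := sdr (fun i => F i b) j with ha
    have haF : a ∈ F j b := (sdr_spec (fun i => F i b) j (hcards j hj)).1
    have hab : a < b := Finset.mem_range.mp (hsub j hj haF)
    refine ⟨a, haF, ?_⟩
    have hcab : c s(a, b) = col n F b a := by
      show col n F (max a b) (min a b) = col n F b a
      rw [max_eq_right hab.le, min_eq_left hab.le]
    rw [hcab, col_eq n F b a hsub]
    cases ι with
    | true =>
      have hHom' : Homog (colc n F) (F j b) true := hHom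
      rw [if_pos ⟨j, hj, rfl, hHom'⟩]; rfl
    | false =>
      have hne : ¬ (∃ j' < n, a = sdr (fun i => F i b) j' ∧
          Homog (colc n F) (F j' b) true) := by
        rintro ⟨j', hj', heq, hhom'⟩
        have hjj : j' = j := by
          by_contra hne
          exact sdr_inj (fun i => F i b) hj' hj hcards hne (heq ▸ ha)
        subst hjj
        have h2 : 1 < (F j' b).card := by have := (hcard j' hj' b hb).1; omega
        obtain ⟨x, hx, y, hy, hxy⟩ := Finset.one_lt_card.mp h2
        have h3 := hhom' x hx y hy hxy
        have h4 : colc n F s(x, y) = false := hHom x hx y hy hxy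
        rw [h3] at h4
        exact Bool.noConfusion h4
      rw [if_neg hne]; rfl
  refine ⟨c, key, ?_⟩
  rintro S hS τ hτS hτcard hmin ⟨j, hj, hinf⟩ ⟨ι, hhom⟩
  -- pick b ∈ {b ∈ S | F j b = τ} with b ≥ b₀
  obtain ⟨b, hbT, hbb₀⟩ : ∃ b ∈ {b ∈ S | F j b = τ}, b₀ ≤ b := by
    by_contra hcon
    push_neg at hcon
    exact hinf (Set.Finite.subset (Set.finite_Iio b₀) (fun b hb => hcon b hb))
  obtain ⟨hbS, hbF⟩ := hbT
  have hτhom : Homog c τ ι := fun x hx y hy hxy => hhom x (hτS hx) y (hτS hy) hxy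
  obtain ⟨a, haτ, hcab⟩ := key j hj b hbb₀ ι (hbF ▸ hτhom)
  have hab : a < b := Finset.mem_range.mp ((hcard j hj b hbb₀).2 haτ)
  rw [hbF] at haτ
  have := hhom a (hτS haτ) b hbS (by omega)
  rw [this] at hcab
  cases ι <;> exact Bool.noConfusion hcab
end

section
/- (Eventual stabilization of approximations.) Let S = {z : ∀x ∃y R(z, x, y)} ⊆ ℕ where R is a decidable relation, and suppose S has at least n+1 elements; let τ be the set of the n+1 smallest elements of S. For b, i ∈ ℕ, let τ_{b,i} be the set of the n+1 smallest a < b such that ∀x < i ∃y < b, R(a, x, y) (when at least n+1 such a exist). Then there exists i such that for all sufficiently large b, τ_{b,i} = τ. -/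
/-- Eventual stabilization: if `τ` is the set of the `n+1` smallest elements of
`S = {z | ∀ x ∃ y, R z x y}`, then there are `i` and `b₀` such that for all `b ≥ b₀`
the approximation "the `n+1` smallest `a < b` with `∀ x < i, ∃ y < b, R a x y`"
equals `τ`: every element of `τ` is such a candidate, and every other candidate
exceeds all of `τ`. -/
theorem eventual_stabilization (n : ℕ) (R : ℕ → ℕ → ℕ → Prop) (τ : Finset ℕ)
    (hτcard : τ.card = n + 1)
    (hτS : ∀ a ∈ τ, ∀ x, ∃ y, R a x y)
    (hτmin : ∀ z, (∀ x, ∃ y, R z x y) → z ∉ τ → ∀ t ∈ τ, t < z) :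
    ∃ i b₀, ∀ b, b₀ ≤ b →
      (∀ a ∈ τ, a < b ∧ ∀ x < i, ∃ y < b, R a x y) ∧
      (∀ a < b, (∀ x < i, ∃ y < b, R a x y) → a ∈ τ ∨ ∀ t ∈ τ, t < a) := by
  classical
  set m : ℕ := τ.sup id + 1 with hm
  have hτm : ∀ t ∈ τ, t < m := fun t ht =>
    Nat.lt_succ_of_le (Finset.le_sup (f := id) ht)
  -- witness of failure
  set f : ℕ → ℕ := fun a => if h : ∃ x, ∀ y, ¬ R a x y then h.choose else 0 with hf
  set i : ℕ := (Finset.range m).sup f + 1 with hi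
  set g : ℕ → ℕ → ℕ := fun a x => if h : ∃ y, R a x y then h.choose else 0 with hg
  set b₀ : ℕ := m + ((τ.sup fun a => (Finset.range i).sup (g a)) + 1) with hb₀
  refine ⟨i, b₀, fun b hb => ⟨?_, ?_⟩⟩
  · intro a ha
    have ham : a < m := hτm a ha
    refine ⟨lt_of_lt_of_le ham (le_trans (Nat.le_add_right _ _) hb), ?_⟩
    intro x hx
    have hex : ∃ y, R a x y := hτS a ha x
    refine ⟨g a x, ?_, ?_⟩
    · have h1 : g a x ≤ (Finset.range i).sup (g a) :=
        Finset.le_sup (Finset.mem_range.mpr hx)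
      have h2 : (Finset.range i).sup (g a) ≤ τ.sup fun a => (Finset.range i).sup (g a) :=
        Finset.le_sup (f := fun a => (Finset.range i).sup (g a)) ha
      have : g a x < b₀ := by
        rw [hb₀]; omega
      exact lt_of_lt_of_le this hb
    · simp only [hg, dif_pos hex]
      exact hex.choose_spec
  · intro a ha hprop
    by_cases haτ : a ∈ τ
    · exact Or.inl haτ
    by_cases hS : ∀ x, ∃ y, R a x y
    · exact Or.inr (hτmin a hS haτ)
    by_cases ham : a < m
    · exfalso
      push_neg at hS
      obtain ⟨x, hx⟩ := hS
      have hex : ∃ x, ∀ y, ¬ R a x y := ⟨x, hx⟩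
      have hfa : ∀ y, ¬ R a (f a) y := by
        simp only [hf, dif_pos hex]
        exact hex.choose_spec
      have hfi : f a < i := by
        have : f a ≤ (Finset.range m).sup f :=
          Finset.le_sup (Finset.mem_range.mpr ham)
        omega
      obtain ⟨y, _, hy⟩ := hprop (f a) hfi
      exact hfa y hy
    · push_neg at ham
      exact Or.inr fun t ht => lt_of_lt_of_le (hτm t ht) ham
end
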